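/- Let Γ be a group and N ≤ Γ a finite index subgroup. If φ : Γ → Γ is an injective homomorphism such that φ restricted to N is conjugation by some fixed element f of a group M ⊇ Γ (i.e., φ(n) = fnf⁻¹ for all n ∈ N), Γ is normal in M, and the centralizer of every finite index subgroup of Γ in M is trivial, then φ(x) = fxf⁻¹ for all x ∈ Γ. -/

import Mathlib

/-! For `x ∈ Γ` and `k` in the normal core `K` of `N` in `Γ` (still of finite index), the two
ways of computing `φ (x⁻¹ k x)`, namely `φ(x)⁻¹ (f k f⁻¹) φ(x)` and `f x⁻¹ k x f⁻¹`, show that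
`f⁻¹ φ(x) f x⁻¹` centralizes `K`, hence is trivial. -/

namespace MonoidHom

variable {G M : Type*} [Group G] [Group M]

theorem commute_conj_inv_mul_of_eqOn_conj {ι ψ : G →* M} {f : M} {H : Subgroup G}
    (hψ : ∀ h ∈ H, ψ h = f * ι h * f⁻¹) {x k : G} (hk : k ∈ H) (hxk : x⁻¹ * k * x ∈ H) :
    Commute (f⁻¹ * ψ x * f * (ι x)⁻¹) (ι k) := by
  have key : (ψ x)⁻¹ * (f * ι k * f⁻¹) * ψ x = f * ((ι x)⁻¹ * ι k * ι x) * f⁻¹ := by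
    simpa [← hψ k hk] using hψ _ hxk
  calc f⁻¹ * ψ x * f * (ι x)⁻¹ * ι k
      = f⁻¹ * ψ x * f * ((ι x)⁻¹ * ι k * ι x) * (ι x)⁻¹ := by group
    _ = f⁻¹ * ψ x * f * (f⁻¹ * ((ψ x)⁻¹ * (f * ι k * f⁻¹) * ψ x) * f) * (ι x)⁻¹ := by
        rw [key]; group
    _ = ι k * (f⁻¹ * ψ x * f * (ι x)⁻¹) := by group

theorem eq_conj_of_eqOn_conj_of_finiteIndex {ι ψ : G →* M} {f : M} {H : Subgroup G}
    [H.FiniteIndex] (hψ : ∀ h ∈ H, ψ h = f * ι h * f⁻¹)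
    (hcen : ∀ K : Subgroup G, K.FiniteIndex → ∀ m : M, (∀ k ∈ K, Commute m (ι k)) → m = 1)
    (x : G) : ψ x = f * ι x * f⁻¹ := by
  have hm : f⁻¹ * ψ x * f * (ι x)⁻¹ = 1 :=
    hcen H.normalCore inferInstance _ fun k hk =>
      commute_conj_inv_mul_of_eqOn_conj hψ (H.normalCore_le hk)
        (H.normalCore_le (by simpa using H.normalCore_normal.conj_mem k hk x⁻¹))
  calc ψ x = f * (f⁻¹ * ψ x * f * (ι x)⁻¹) * ι x * f⁻¹ := by group
    _ = f * ι x * f⁻¹ := by rw [hm]; group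

end MonoidHom

theorem stmt18_general (M : Type*) [Group M] (Γ : Subgroup M)
    (N : Subgroup M) (hNΓ : N ≤ Γ) (hNfi : (N.subgroupOf Γ).FiniteIndex)
    (hcen : ∀ K : Subgroup M, K ≤ Γ → (K.subgroupOf Γ).FiniteIndex →
      ∀ m : M, (∀ k ∈ K, m * k = k * m) → m = 1)
    (φ : Γ →* Γ)
    (f : M) (hf : ∀ n : M, ∀ hn : n ∈ N, ((φ ⟨n, hNΓ hn⟩ : Γ) : M) = f * n * f⁻¹) :
    ∀ x : Γ, ((φ x : Γ) : M) = f * (x : M) * f⁻¹ := by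
  refine MonoidHom.eq_conj_of_eqOn_conj_of_finiteIndex (ι := Γ.subtype)
    (ψ := Γ.subtype.comp φ) (H := N.subgroupOf Γ) (fun n hn => hf n hn) ?_
  intro K hK m hm
  refine hcen (K.map Γ.subtype) (Γ.map_subtype_le K) ?_ m ?_
  · rwa [← Subgroup.comap_subtype, Subgroup.comap_map_eq_self_of_injective Γ.subtype_injective]
  · rintro _ ⟨k, hk, rfl⟩
    exact hm k hk

/-- Γ ⊴ M, N ≤ Γ of finite index, centralizers in M of finite index
subgroups of Γ are trivial. If φ : Γ → Γ is an injective homomorphism agreeing with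
conjugation by f ∈ M on N, then φ is conjugation by f on all of Γ. -/
theorem stmt18 (M : Type*) [Group M] (Γ : Subgroup M) [Γ.Normal]
    (N : Subgroup M) (hNΓ : N ≤ Γ) (hNfi : (N.subgroupOf Γ).FiniteIndex)
    (hcen : ∀ K : Subgroup M, K ≤ Γ → (K.subgroupOf Γ).FiniteIndex →
      ∀ m : M, (∀ k ∈ K, m * k = k * m) → m = 1)
    (φ : Γ →* Γ) (hφ : Function.Injective φ)
    (f : M) (hf : ∀ n : M, ∀ hn : n ∈ N, ((φ ⟨n, hNΓ hn⟩ : Γ) : M) = f * n * f⁻¹) :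
    ∀ x : Γ, ((φ x : Γ) : M) = f * (x : M) * f⁻¹ :=
  stmt18_general M Γ N hNΓ hNfi hcen φ f hf
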